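/- arXiv:2301.03180 — 8 statements merged into one kernel-verified Lean document; each statement's English description precedes it below -/
import Mathlib

section
/- Let G be a DAG without v-structures whose Hasse diagram is a rooted tree. If u → v is an arc in G, then for every vertex w that is both a strict descendant of u and a strict ancestor of v, the arc u → w is also in G. -/
variable {V : Type*}

def Acyclic (G : V → V → Prop) : Prop := ∀ v, ¬ Relation.TransGen G v v

def NoVStructure (G : V → V → Prop) : Prop :=
  ∀ u v w, u ≠ w → G u v → G w v → (G u w ∨ G w u)

def Hasse (G : V → V → Prop) (x y : V) : Prop :=
  Relation.ReflTransGen G x y ∧ x ≠ y ∧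
    ∀ z, Relation.ReflTransGen G x z → Relation.ReflTransGen G z y → z = x ∨ z = y

def IsArborescence (T : V → V → Prop) : Prop :=
  ∃ r, (∀ v, ¬ T v r) ∧ (∀ v, v ≠ r → ∃! p, T p v) ∧ ∀ v, Relation.ReflTransGen T r v

lemma aux_pull {G : V → V → Prop} (hacyc : Acyclic G) (hnv : NoVStructure G)
    {u x : V} (hux : G u x) :
    ∀ w, Relation.ReflTransGen G w x → Relation.TransGen G u w → G u w := by
  intro w hwx
  induction hwx using Relation.ReflTransGen.head_induction_on with
  | refl => intro _; exact hux
  | @head b c hbc hcx IH =>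
    intro hub
    have huc : Relation.TransGen G u c := hub.tail hbc
    have huy : G u c := IH huc
    rcases hnv u c b (fun h => hacyc b (h ▸ hub)) huy hbc with h | h
    · exact h
    · exact absurd (hub.tail h) (hacyc u)

theorem stmt1 [Fintype V] (G : V → V → Prop) (hacyc : Acyclic G)
    (hnv : NoVStructure G) (hH : IsArborescence (Hasse G))
    (u v : V) (huv : G u v) :
    ∀ w, Relation.TransGen G u w → Relation.TransGen G w v → G u w := by
  intro w huw hwv
  obtain ⟨x, hwx, hxv⟩ := (Relation.TransGen.tail'_iff).1 hwv
  have hux : G u x := by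
    rcases eq_or_ne u x with rfl | hne
    · exact absurd (huw.trans_left hwx) (hacyc u)
    · rcases hnv u v x hne huv hxv with h | h
      · exact h
      · exact absurd ((huw.trans_left hwx).tail h) (hacyc u)
  exact aux_pull hacyc hnv hux w hwx huw
end

section
/- The transitive reduction of a finite DAG is unique: for any DAG G there is exactly one minimal (in number of edges) subgraph on the same vertex set whose reachability relation equals that of G, and its edge set is a subset of the edges of G. -/
/-!
Reachability in an acyclic graph is a partial order on the vertices, and on a finite vertex set
every comparable pair `u < v` is joined by a chain of covering pairs `u ⋖ w ⋖ ⋯ ⋖ v`. Conversely,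
a path witnessing `u ≤ v` for a covering pair `u ⋖ v` can only pass through `u` and `v`, so any
edge set with the same reachability must contain the edge `(u, v)`. Hence the covering pairs form
an edge set with the right reachability that is contained in every other one: it is the unique
transitive reduction, and it lies inside `E`.
-/

open Relation Finset

abbrev Relation.reflTransGenPartialOrder {α : Type*} (r : α → α → Prop)
    (hr : ∀ a, ¬ TransGen r a a) : PartialOrder α where
  le := ReflTransGen r
  le_refl _ := .refl
  le_trans _ _ _ := ReflTransGen.trans
  le_antisymm a b hab hba := by
    rcases reflTransGen_iff_eq_or_transGen.1 hab with hba' | hab'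
    · exact hba'.symm
    · exact absurd (hab'.trans_left hba) (hr a)

section CoverEdges

variable {α : Type*} [PartialOrder α]

def GeneratesLE (F : Finset (α × α)) : Prop :=
  ∀ u v, ReflTransGen (fun a b => (a, b) ∈ F) u v ↔ u ≤ v

theorem CovBy.rel_of_forall_reflTransGen_iff {S : α → α → Prop}
    (hS : ∀ x y, ReflTransGen S x y ↔ x ≤ y) {a b : α} (h : a ⋖ b) : S a b := by
  suffices ∀ x, ReflTransGen S x b → x = a → S a b from this a ((hS a b).2 h.le) rfl
  intro x hxb
  induction hxb using ReflTransGen.head_induction_on with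
  | refl => exact fun hba => absurd hba h.ne'
  | head hxy hyb ih =>
    rintro rfl
    rcases h.eq_or_eq ((hS _ _).1 (.single hxy)) ((hS _ _).1 hyb) with rfl | rfl
    · exact ih rfl
    · exact hxy

variable (α) [Fintype α]

open Classical in
noncomputable def coverEdges : Finset (α × α) :=
  univ.filter fun p => p.1 ⋖ p.2

variable {α}

theorem mem_coverEdges {p : α × α} : p ∈ coverEdges α ↔ p.1 ⋖ p.2 := by
  simp [coverEdges]

theorem coverEdges_subset {F : Finset (α × α)} (hF : GeneratesLE F) : coverEdges α ⊆ F :=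
  fun _ hp => (mem_coverEdges.1 hp).rel_of_forall_reflTransGen_iff hF

theorem generatesLE_coverEdges [LocallyFiniteOrder α] : GeneratesLE (coverEdges α) := by
  have hedges : (fun a b => (a, b) ∈ coverEdges α) = (· ⋖ ·) := by
    ext a b
    exact mem_coverEdges
  intro u v
  rw [le_iff_reflTransGen_covBy, hedges]

end CoverEdges

theorem stmt2_general {V : Type*} [Fintype V] (E : Finset (V × V))
    (hacyc : ∀ v, ¬ Relation.TransGen (fun a b => (a, b) ∈ E) v v) :
    ∃ E' : Finset (V × V),
      ((∀ u v, Relation.ReflTransGen (fun a b => (a, b) ∈ E') u v ↔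
          Relation.ReflTransGen (fun a b => (a, b) ∈ E) u v) ∧
        (∀ E'' : Finset (V × V),
          (∀ u v, Relation.ReflTransGen (fun a b => (a, b) ∈ E'') u v ↔
            Relation.ReflTransGen (fun a b => (a, b) ∈ E) u v) →
          E'.card ≤ E''.card)) ∧
      E' ⊆ E ∧
      (∀ E'' : Finset (V × V),
        ((∀ u v, Relation.ReflTransGen (fun a b => (a, b) ∈ E'') u v ↔
            Relation.ReflTransGen (fun a b => (a, b) ∈ E) u v) ∧
          (∀ E''' : Finset (V × V),
            (∀ u v, Relation.ReflTransGen (fun a b => (a, b) ∈ E''') u v ↔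
              Relation.ReflTransGen (fun a b => (a, b) ∈ E) u v) →
            E''.card ≤ E'''.card)) → E'' = E') := by
  classical
  let : PartialOrder V := reflTransGenPartialOrder _ hacyc
  let : LocallyFiniteOrder V := Fintype.toLocallyFiniteOrder
  have hcover : GeneratesLE (coverEdges V) := generatesLE_coverEdges
  refine ⟨coverEdges V, ⟨hcover, fun F hF => card_le_card (coverEdges_subset hF)⟩,
    coverEdges_subset fun _ _ => Iff.rfl, fun F ⟨hF, hmin⟩ => ?_⟩
  exact (eq_of_subset_of_card_le (coverEdges_subset hF) (hmin _ hcover)).symm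

theorem stmt2 {V : Type*} [Fintype V] [DecidableEq V] (E : Finset (V × V))
    (hacyc : ∀ v, ¬ Relation.TransGen (fun a b => (a, b) ∈ E) v v) :
    ∃ E' : Finset (V × V),
      ((∀ u v, Relation.ReflTransGen (fun a b => (a, b) ∈ E') u v ↔
          Relation.ReflTransGen (fun a b => (a, b) ∈ E) u v) ∧
        (∀ E'' : Finset (V × V),
          (∀ u v, Relation.ReflTransGen (fun a b => (a, b) ∈ E'') u v ↔
            Relation.ReflTransGen (fun a b => (a, b) ∈ E) u v) →
          E'.card ≤ E''.card)) ∧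
      E' ⊆ E ∧
      (∀ E'' : Finset (V × V),
        ((∀ u v, Relation.ReflTransGen (fun a b => (a, b) ∈ E'') u v ↔
            Relation.ReflTransGen (fun a b => (a, b) ∈ E) u v) ∧
          (∀ E''' : Finset (V × V),
            (∀ u v, Relation.ReflTransGen (fun a b => (a, b) ∈ E''') u v ↔
              Relation.ReflTransGen (fun a b => (a, b) ∈ E) u v) →
            E''.card ≤ E'''.card)) → E'' = E') :=
  stmt2_general E hacyc
end

section
/- In a DAG without v-structures, every covered edge is an edge of the Hasse diagram (transitive reduction). Equivalently, if u → v is an arc of G that is not in the transitive reduction of G, then u → v is not a covered edge. -/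
variable {V : Type*}

theorem stmt3 [Fintype V] (G : V → V → Prop) (hacyc : Acyclic G) (hnv : NoVStructure G)
    (u v : V) (huv : G u v)
    (hcov : ∀ x, (G x u ∧ x ≠ v) ↔ (G x v ∧ x ≠ u)) :
    ∀ z, z ≠ u → z ≠ v →
      ¬(Relation.ReflTransGen G u z ∧ Relation.ReflTransGen G z v) := by
  intro z hzu hzv ⟨huz, hzvp⟩
  rcases hzvp.cases_tail with h | ⟨w, hzw, hwv⟩
  · exact hzv h.symm
  · by_cases hwu : w = u
    · subst hwu
      rcases huz.cases_head with h | ⟨b, hub, hbz⟩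
      · exact hzu h.symm
      · exact hacyc w ((Relation.TransGen.head' hub hbz).trans_left hzw)
    · have hGwu : G w u := ((hcov w).mpr ⟨hwv, hwu⟩).1
      exact hacyc u (Relation.TransGen.tail' (huz.trans hzw) hGwu)
end

section
/- Let J be a finite set of closed intervals on a path (a rooted tree that is a directed path v₁ → v₂ → ⋯ → vₙ), where interval [a,b] is stabbed by vertex z iff a ≤ z ≤ b in the path order. Define, for each vertex v: E_v as intervals ending at v, and the recurrence opt(U,v) where opt is the minimum number of vertices from the subpath starting at v needed to stab all intervals in U. Then for any optimal stabbing set I and vertex v with no interval ending at v, either I contains v or an ancestor of v, or for each child y of v with some interval covered by v intersecting the subtree of y, I contains a vertex on the path from a strict descendant of v to the earliest-ending such interval's endpoint. -/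
variable {V : Type*}

private lemma anc_comp {T : V → V → Prop} (hT : IsArborescence T)
    (π : V → ℕ) (hπ : ∀ a b, Relation.TransGen T a b → π a < π b) :
    ∀ n b, π b ≤ n → ∀ x y, Relation.ReflTransGen T x b → Relation.ReflTransGen T y b →
      Relation.ReflTransGen T x y ∨ Relation.ReflTransGen T y x := by
  obtain ⟨r, hr0, hr1, _⟩ := hT
  intro n
  induction n with
  | zero =>
    intro b hb x y hx hy
    rcases hx.cases_tail with rfl | ⟨p, _, hpb⟩
    · exact Or.inr hy
    · exact absurd (hπ p b (Relation.TransGen.single hpb)) (by omega)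
  | succ n ih =>
    intro b hb x y hx hy
    rcases hx.cases_tail with rfl | ⟨p, hxp, hpb⟩
    · exact Or.inr hy
    rcases hy.cases_tail with rfl | ⟨q, hyq, hqb⟩
    · exact Or.inl hx
    have hbr : b ≠ r := fun h => hr0 p (h ▸ hpb)
    have hpq : p = q := ((hr1 b hbr).unique hpb hqb)
    subst hpq
    have : π p < π b := hπ p b (Relation.TransGen.single hpb)
    exact ih p (by omega) x y hxp hyq

theorem stmt10 [Fintype V] (T : V → V → Prop) (hT : IsArborescence T)
    (π : V → ℕ) (hπ : ∀ a b, Relation.TransGen T a b → π a < π b)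
    (J : Finset (V × V)) (hJ : ∀ p ∈ J, Relation.TransGen T p.1 p.2)
    (I : Finset V)
    (hstab : ∀ p ∈ J, ∃ z ∈ I,
      Relation.ReflTransGen T p.1 z ∧ Relation.ReflTransGen T z p.2)
    (hopt : ∀ S : Finset V,
      (∀ p ∈ J, ∃ z ∈ S,
        Relation.ReflTransGen T p.1 z ∧ Relation.ReflTransGen T z p.2) →
      I.card ≤ S.card)
    (v : V) (hEv : ∀ p ∈ J, p.2 ≠ v) :
    (∃ z ∈ I, Relation.ReflTransGen T z v) ∨
    (∀ y, T v y → ∀ b : V,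
      ((∃ a, (a, b) ∈ J ∧ Relation.ReflTransGen T a v ∧ Relation.ReflTransGen T y b) ∧
        ∀ a' b' : V, (a', b') ∈ J → Relation.ReflTransGen T a' v →
          Relation.ReflTransGen T y b' → π b ≤ π b') →
      ∃ w ∈ I, Relation.TransGen T v w ∧ Relation.ReflTransGen T w b) := by
  by_cases h : ∃ z ∈ I, Relation.ReflTransGen T z v
  · exact Or.inl h
  · right
    intro y hy b ⟨⟨a, haJ, hav, hyb⟩, _⟩
    obtain ⟨z, hzI, haz, hzb⟩ := hstab (a, b) haJ
    have hvb : Relation.ReflTransGen T v b := (Relation.ReflTransGen.single hy).trans hyb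
    rcases anc_comp ⟨_, (hT.choose_spec)⟩ π hπ (π b) b le_rfl z v hzb hvb with hzv | hvz
    · exact absurd ⟨z, hzI, hzv⟩ h
    · have hne : v ≠ z := fun e => h ⟨z, hzI, e ▸ Relation.ReflTransGen.refl⟩
      exact ⟨z, hzI, (Relation.reflTransGen_iff_eq_or_transGen.mp hvz).resolve_left (Ne.symm hne) , hzb⟩
end

section
/- Let T be a rooted tree, J a finite set of tree-intervals with no superset intervals (so all ending vertices are distinct), ordered so that [a,b] ≺ [c,d] iff f(a) < f(c), or a = c and ℓ(b) > ℓ(d), where f, ℓ are Euler tour first/last visit times. For any vertex v, if intervals [a,b] ≺ [c,d] both intersect the subtree rooted at v (i.e., b and d lie in the subtree of v), and some strict ancestor z of v stabs [c,d], then z also stabs [a,b]. -/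
variable {V : Type*}

theorem stmt11 [Fintype V] (T : V → V → Prop) (hT : IsArborescence T)
    (f l : V → ℕ)
    (hstrict : ∀ a b, Relation.TransGen T a b → f a < f b)
    (hsub : ∀ v u, Relation.ReflTransGen T v u ↔ (f v ≤ f u ∧ l u ≤ l v))
    (J : Finset (V × V)) (hJ : ∀ p ∈ J, Relation.TransGen T p.1 p.2)
    (hnosup : ∀ p ∈ J, ∀ q ∈ J, p ≠ q →
      ¬(Relation.ReflTransGen T p.1 q.1 ∧ Relation.ReflTransGen T q.2 p.2))
    (v : V) (a b c d : V) (hab : (a, b) ∈ J) (hcd : (c, d) ∈ J)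
    (hbv : Relation.ReflTransGen T v b) (hdv : Relation.ReflTransGen T v d)
    (hprec : f a < f c ∨ (a = c ∧ l d < l b))
    (z : V) (hz : Relation.TransGen T z v)
    (hstabcd : Relation.ReflTransGen T c z ∧ Relation.ReflTransGen T z d) :
    Relation.ReflTransGen T a z ∧ Relation.ReflTransGen T z b := by
  obtain ⟨r, hroot, huniq, -⟩ := hT
  -- ancestors of a common vertex are comparable
  have comp : ∀ x y w : V, Relation.ReflTransGen T x w → Relation.ReflTransGen T y w →
      Relation.ReflTransGen T x y ∨ Relation.ReflTransGen T y x := by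
    intro x y w hxw
    induction hxw with
    | refl => intro hyw; exact Or.inr hyw
    | @tail p b hxp step ih =>
      intro hyb
      rcases (Relation.ReflTransGen.cases_tail hyb) with h | ⟨q, hyq, stepq⟩
      · subst h; exact Or.inl (hxp.tail step)
      · have hb : b ≠ r := fun h => hroot p (h ▸ step)
        obtain ⟨par, -, hp⟩ := huniq b hb
        have : q = p := (hp q stepq).trans (hp p step).symm
        exact ih (this ▸ hyq)
  have hzb : Relation.ReflTransGen T z b := (hz.to_reflTransGen).trans hbv
  refine ⟨?_, hzb⟩
  have hab' : Relation.ReflTransGen T a b := (hJ _ hab).to_reflTransGen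
  rcases comp a z b hab' hzb with h | h
  · exact h
  · -- z is an ancestor of a, so c is an ancestor of a
    rcases hprec with hfa | ⟨hac, -⟩
    · have hca : Relation.ReflTransGen T c a := hstabcd.1.trans h
      have : f c ≤ f a := ((hsub c a).1 hca).1
      omega
    · exact hac ▸ hstabcd.1
end

section
/- Let T be a rooted tree, J a finite set of tree-intervals with no superset intervals, v a vertex, E_v the set of intervals of J ending exactly at v, and I_v the set of intervals of J whose ending vertex lies in the subtree of v. If both E_v and I_v \ E_v are nonempty, then under the ordering ≺ (compare intervals by DFS first-visit time of start vertex, breaking ties by later last-visit time of end vertex), every interval of E_v precedes every interval of I_v \ E_v. -/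
variable {V : Type*}

theorem stmt12 [Fintype V] (T : V → V → Prop) (hT : IsArborescence T)
    (f l : V → ℕ)
    (hstrict : ∀ a b, Relation.TransGen T a b → f a < f b)
    (hsub : ∀ v u, Relation.ReflTransGen T v u ↔ (f v ≤ f u ∧ l u ≤ l v))
    (J : Finset (V × V)) (hJ : ∀ p ∈ J, Relation.TransGen T p.1 p.2)
    (hnosup : ∀ p ∈ J, ∀ q ∈ J, p ≠ q →
      ¬(Relation.ReflTransGen T p.1 q.1 ∧ Relation.ReflTransGen T q.2 p.2))
    (v : V)
    (hE : ∃ p ∈ J, p.2 = v)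
    (hI : ∃ q ∈ J, Relation.ReflTransGen T v q.2 ∧ q.2 ≠ v) :
    ∀ p ∈ J, p.2 = v → ∀ q ∈ J, Relation.ReflTransGen T v q.2 → q.2 ≠ v →
      (f p.1 < f q.1 ∨ (p.1 = q.1 ∧ l q.2 < l p.2)) := by
  -- comparability of ancestors
  obtain ⟨r, hr, huniq, hroot⟩ := hT
  have comp : ∀ a b w, Relation.ReflTransGen T a w → Relation.ReflTransGen T b w →
      Relation.ReflTransGen T a b ∨ Relation.ReflTransGen T b a := by
    intro a b w ha hb
    induction hb using Relation.ReflTransGen.head_induction_on with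
    | refl => left; exact ha
    | head hbc hcw ih =>
      rename_i b' c
      rcases ih with hac | hca
      · rcases hac.cases_tail with rfl | ⟨d, had, hdc⟩
        · right; exact Relation.ReflTransGen.single hbc
        · have hcr : c ≠ r := by rintro rfl; exact hr b' hbc
          have : d = b' := ((huniq c hcr).unique hdc hbc)
          subst this; left; exact had
      · right; exact Relation.ReflTransGen.head hbc hca
  intro p hp hpv q hq hvq hqv
  have hpq : p ≠ q := by intro h; subst h; exact hqv hpv
  -- ¬ (q.1 ancestor of p.1), since p.2 = v is ancestor of q.2
  have hp2q2 : Relation.ReflTransGen T p.2 q.2 := hpv ▸ hvq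
  have hnq1p1 : ¬ Relation.ReflTransGen T q.1 p.1 := fun h =>
    hnosup q hq p hp hpq.symm ⟨h, hp2q2⟩
  have hpv' : Relation.TransGen T p.1 v := hpv ▸ hJ p hp
  have hq1q2 : Relation.TransGen T q.1 q.2 := hJ q hq
  -- q.1 and v are both ancestors of q.2, hence comparable
  rcases comp q.1 v q.2 hq1q2.to_reflTransGen hvq with hq1v | hvq1
  · -- q.1 ancestor of v; p.1 also (strict) ancestor of v, so comparable
    rcases comp p.1 q.1 v hpv'.to_reflTransGen hq1v with hp1q1 | hq1p1
    · rcases hp1q1.cases_head with heq | ⟨c, hc, hcq⟩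
      · exact absurd (heq ▸ Relation.ReflTransGen.refl) hnq1p1
      · exact Or.inl (hstrict _ _ (Relation.TransGen.head' hc hcq))
    · exact absurd hq1p1 hnq1p1
  · -- v ancestor of q.1
    exact Or.inl (hstrict _ _ (Relation.TransGen.trans_left hpv' hvq1))
end

section
/- Let G be a connected DAG without v-structures with at least 2 vertices, and let S be any subset of its arcs. Then there exists a subset S' of arcs of G such that: (1) the underlying undirected graph of G restricted to S' is a forest, (2) the set of endpoints of arcs in S' is a subset of the set of endpoints of arcs in S, and (3) S' can be obtained from S by repeatedly replacing, in each undirected cycle r → u₁ → ⋯ → u_k → s ← v_ℓ ← ⋯ ← v₁ ← r contained in S with r minimal and s maximal in a fixed topological order, an arc v_ℓ → s by an arc v_ℓ → u_k of G (or symmetrically), where the arc v_ℓ ∼ u_k is guaranteed to exist in G because G has no v-structures. -/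
/-!
Fix a topological rank `π` of `G`. As long as some vertex `s` has two distinct in-neighbours
`a`, `b` in `S`, the absence of v-structures makes `a` and `b` adjacent, say `a → b`, and replacing
the arc `a → s` by `a → b` lowers `∑_{(u,v) ∈ S} (π u + π v)` because `π b < π s`. When no such
vertex is left, `S` is a forest: on an undirected cycle, the `π`-maximal vertex would have both of
its cycle neighbours as in-neighbours.
-/

open Finset SimpleGraph

variable {V : Type*}

def ConnectedUndirected (G : V → V → Prop) : Prop :=
  ∀ u v, Relation.ReflTransGen (fun a b => G a b ∨ G b a) u v

/-- One replacement step: two arcs `vl → s` and `uk → s` into a common vertex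
`s`; since `G` has no v-structures the edge `vl ∼ uk` exists in `G`, and we
replace the arc into `s` by the corresponding arc between the two in-neighbors. -/
def ReplaceStep [DecidableEq V] (G : V → V → Prop) (S₁ S₂ : Finset (V × V)) : Prop :=
  ∃ vl uk s : V, (vl, s) ∈ S₁ ∧ (uk, s) ∈ S₁ ∧ vl ≠ uk ∧
    ((G vl uk ∧ S₂ = insert (vl, uk) (S₁.erase (vl, s))) ∨
     (G uk vl ∧ S₂ = insert (uk, vl) (S₁.erase (uk, s))))

section Forest

variable {α : Type*} [LinearOrder α] {R : V → V → Prop} {π : V → α}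

lemma SimpleGraph.Walk.IsCycle.exists_ne_rel_of_lt (hπ : ∀ u v, R u v → π u < π v) {x : V}
    {c : (fromRel R).Walk x x} (hc : c.IsCycle) : ∃ a b s, a ≠ b ∧ R a s ∧ R b s := by
  classical
  obtain ⟨s, hs, hmax⟩ := c.support.toFinset.exists_max_image π ⟨x, by simp⟩
  rw [List.mem_toFinset] at hs
  set c' := c.rotate s hs
  have hc' : c'.IsCycle := hc.rotate hs
  have rel_of_adj : ∀ y, (fromRel R).Adj s y → y ∈ c'.support → R y s := by
    intro y hy hyc
    rw [c.mem_support_rotate_iff] at hyc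
    refine ((fromRel_adj _ _ _).1 hy).2.resolve_left fun hsy => ?_
    exact (hπ s y hsy).not_ge (hmax y (List.mem_toFinset.2 hyc))
  refine ⟨c'.snd, c'.penultimate, s, hc'.snd_ne_penultimate, ?_, ?_⟩
  · exact rel_of_adj _ (c'.adj_snd hc'.not_nil) (c'.getVert_mem_support 1)
  · exact rel_of_adj _ (c'.adj_penultimate hc'.not_nil).symm (c'.getVert_mem_support _)

lemma isAcyclic_fromRel_of_lt (hπ : ∀ u v, R u v → π u < π v)
    (hin : ∀ a b s, R a s → R b s → a = b) : (fromRel R).IsAcyclic := fun _ _ hc =>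
  let ⟨a, b, s, hab, ha, hb⟩ := hc.exists_ne_rel_of_lt hπ
  hab (hin a b s ha hb)

end Forest

lemma Acyclic.ncard_transGen_lt [Finite V] {G : V → V → Prop} (hG : Acyclic G) {u v : V}
    (huv : G u v) : {w | Relation.TransGen G w u}.ncard < {w | Relation.TransGen G w v}.ncard :=
  Set.ncard_lt_ncard ⟨fun _ hw => Relation.TransGen.tail hw huv,
    fun hsub => hG u (hsub (Relation.TransGen.single huv))⟩

def arcPotential (π : V → ℕ) (T : Finset (V × V)) : ℕ := ∑ e ∈ T, (π e.1 + π e.2)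

def IsEndpoint (T : Finset (V × V)) (x : V) : Prop := ∃ y, (x, y) ∈ T ∨ (y, x) ∈ T

section Replace

variable [DecidableEq V] {T : Finset (V × V)} {a b s : V}

lemma arcPotential_replace_lt {π : V → ℕ} (hbs : π b < π s) (ha : (a, s) ∈ T) :
    arcPotential π (insert (a, b) (T.erase (a, s))) < arcPotential π T := by
  have herase := Finset.sum_erase_add T (fun e => π e.1 + π e.2) ha
  dsimp only at herase
  unfold arcPotential
  by_cases hmem : (a, b) ∈ T.erase (a, s)
  · rw [Finset.insert_eq_self.2 hmem]
    omega
  · rw [Finset.sum_insert hmem]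
    dsimp only
    omega

lemma IsEndpoint.of_replace (ha : (a, s) ∈ T) (hb : (b, s) ∈ T) {x : V}
    (hx : IsEndpoint (insert (a, b) (T.erase (a, s))) x) : IsEndpoint T x := by
  obtain ⟨y, hy | hy⟩ := hx <;> rcases Finset.mem_insert.1 hy with h | h
  · obtain ⟨rfl, -⟩ := Prod.mk.inj h
    exact ⟨s, .inl ha⟩
  · exact ⟨y, .inl (Finset.mem_of_mem_erase h)⟩
  · obtain ⟨-, rfl⟩ := Prod.mk.inj h
    exact ⟨s, .inl hb⟩
  · exact ⟨y, .inr (Finset.mem_of_mem_erase h)⟩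

variable {G : V → V → Prop} {π : V → ℕ}

lemma exists_replaceStep_of_ne (hπ : ∀ u v, G u v → π u < π v) (hnv : NoVStructure G)
    (hT : ∀ e ∈ T, G e.1 e.2) (ha : (a, s) ∈ T) (hb : (b, s) ∈ T) (hab : a ≠ b) :
    ∃ T', ReplaceStep G T T' ∧ (∀ e ∈ T', G e.1 e.2) ∧
      arcPotential π T' < arcPotential π T ∧ ∀ x, IsEndpoint T' x → IsEndpoint T x := by
  have replace : ∀ a b, (a, s) ∈ T → (b, s) ∈ T → G a b →
      (∀ e ∈ insert (a, b) (T.erase (a, s)), G e.1 e.2) ∧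
      arcPotential π (insert (a, b) (T.erase (a, s))) < arcPotential π T ∧
      ∀ x, IsEndpoint (insert (a, b) (T.erase (a, s))) x → IsEndpoint T x := by
    intro a b ha hb hGab
    refine ⟨fun e he => ?_, arcPotential_replace_lt (hπ b s (hT _ hb)) ha,
      fun x => IsEndpoint.of_replace ha hb⟩
    rcases Finset.mem_insert.1 he with rfl | he
    · exact hGab
    · exact hT e (Finset.mem_of_mem_erase he)
  rcases hnv a s b hab (hT _ ha) (hT _ hb) with hGab | hGba
  · exact ⟨_, ⟨a, b, s, ha, hb, hab, .inl ⟨hGab, rfl⟩⟩, replace a b ha hb hGab⟩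
  · exact ⟨_, ⟨a, b, s, ha, hb, hab, .inr ⟨hGba, rfl⟩⟩, replace b a hb ha hGba⟩

lemma exists_replaceStep_reflTransGen_isAcyclic (hπ : ∀ u v, G u v → π u < π v)
    (hnv : NoVStructure G) (T : Finset (V × V)) (hT : ∀ e ∈ T, G e.1 e.2) :
    ∃ T', Relation.ReflTransGen (ReplaceStep G) T T' ∧ (∀ e ∈ T', G e.1 e.2) ∧
      (fromRel fun a b => (a, b) ∈ T').IsAcyclic ∧ ∀ x, IsEndpoint T' x → IsEndpoint T x := by
  induction hn : arcPotential π T using Nat.strong_induction_on generalizing T with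
  | _ n ih =>
    by_cases hin : ∀ a b s, (a, s) ∈ T → (b, s) ∈ T → a = b
    · exact ⟨T, .refl, hT, isAcyclic_fromRel_of_lt (fun u v h => hπ u v (hT _ h)) hin,
        fun _ => id⟩
    push Not at hin
    obtain ⟨a, b, s, ha, hb, hab⟩ := hin
    obtain ⟨T₁, hstep, hT₁, hlt, hend₁⟩ := exists_replaceStep_of_ne hπ hnv hT ha hb hab
    obtain ⟨T', hrt, hT', hacyc, hend⟩ := ih _ (hn ▸ hlt) T₁ hT₁ rfl
    exact ⟨T', .head hstep hrt, hT', hacyc, fun x hx => hend₁ x (hend x hx)⟩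

end Replace

theorem stmt14_general [Fintype V] [DecidableEq V] (G : V → V → Prop)
    (hacyc : Acyclic G) (hnv : NoVStructure G)
    (S : Finset (V × V)) (hS : ∀ e ∈ S, G e.1 e.2) :
    ∃ S' : Finset (V × V),
      Relation.ReflTransGen (ReplaceStep G) S S' ∧
      (∀ e ∈ S', G e.1 e.2) ∧
      (SimpleGraph.fromRel (fun a b => (a, b) ∈ S')).IsAcyclic ∧
      (∀ x : V, (∃ y, (x, y) ∈ S' ∨ (y, x) ∈ S') → (∃ y, (x, y) ∈ S ∨ (y, x) ∈ S)) :=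
  exists_replaceStep_reflTransGen_isAcyclic (G := G) (fun _ _ => hacyc.ncard_transGen_lt) hnv S hS

theorem stmt14 [Fintype V] [DecidableEq V] (G : V → V → Prop)
    (hacyc : Acyclic G) (hnv : NoVStructure G) (hconn : ConnectedUndirected G)
    (hcard : 2 ≤ Fintype.card V)
    (S : Finset (V × V)) (hS : ∀ e ∈ S, G e.1 e.2) :
    ∃ S' : Finset (V × V),
      Relation.ReflTransGen (ReplaceStep G) S S' ∧
      (∀ e ∈ S', G e.1 e.2) ∧
      (SimpleGraph.fromRel (fun a b => (a, b) ∈ S')).IsAcyclic ∧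
      (∀ x : V, (∃ y, (x, y) ∈ S' ∨ (y, x) ∈ S') → (∃ y, (x, y) ∈ S ∨ (y, x) ∈ S)) :=
  stmt14_general G hacyc hnv S hS
end

section
/- Let G be a DAG without v-structures, u → v an arc of G, and suppose vertex w (an ancestor of u in the Hasse tree) is such that intervening on w orients u → v under Meek rules. Then the set R₁⁻¹(G, u → v) of vertices whose atomic intervention orients u → v is exactly Des[w*] ∩ Anc[v] for some ancestor w* of u — i.e., it forms a contiguous interval along the unique root-to-v path in the Hasse diagram of G. In particular, this set always contains both u and v, contains no strict descendant of v, and is upward-closed within Des[w*] ∩ Anc[u]: if it contains w, it contains every vertex on the Hasse-tree path from w to u. -/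
variable {V : Type*}

def Adjacent (G : V → V → Prop) (a b : V) : Prop := G a b ∨ G b a

/-- Arcs of the ground-truth DAG `G` recovered after an atomic intervention on
`z`: the arcs incident to `z`, closed under Meek rules R1–R4 (oriented
consistently with the ground truth `G`). -/
inductive Oriented (G : V → V → Prop) (z : V) : V → V → Prop
  | base {a b : V} : G a b → (a = z ∨ b = z) → Oriented G z a b
  | meek1 {a b c : V} : Oriented G z c a → G a b → ¬ Adjacent G c b →
      Oriented G z a b
  | meek2 {a b c : V} : Oriented G z a c → Oriented G z c b → G a b →
      Oriented G z a b
  | meek3 {a b c d : V} : Oriented G z d b → Oriented G z c b → Adjacent G d a →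
      Adjacent G c a → ¬ Adjacent G c d → G a b → Oriented G z a b
  | meek4 {a b c d : V} : Oriented G z d c → Oriented G z c b → Adjacent G d a →
      Adjacent G c a → ¬ Adjacent G b d → G a b → Oriented G z a b

section Aux

variable {G : V → V → Prop}

/-- Every oriented arc is an edge of `G`. -/
lemma Oriented.edge {z a b : V} (h : Oriented G z a b) : G a b := by
  cases h <;> assumption

/-- The intervened vertex is an ancestor of the head of every oriented arc. -/
lemma Oriented.anc {z a b : V} (h : Oriented G z a b) :
    Relation.ReflTransGen G z b := by
  induction h with
  | base hab hz =>
    rcases hz with rfl | rfl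
    · exact Relation.ReflTransGen.single hab
    · exact Relation.ReflTransGen.refl
  | meek1 hca hab hnadj ih => exact ih.tail hab
  | meek2 hac hcb hab ih1 ih2 => exact ih2
  | meek3 hdb hcb hda hca hncd hab ih1 ih2 => exact ih1
  | meek4 hdc hcb hda hca hnbd hab ih1 ih2 => exact ih2

/-- No edge back along a directed path (acyclicity). -/
lemma no_back (hacyc : ∀ x, ¬ Relation.TransGen G x x) {x y : V}
    (h1 : Relation.ReflTransGen G x y) (h2 : G y x) : False :=
  hacyc y (Relation.TransGen.head' h2 h1)

/-- Antisymmetry of reachability. -/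
lemma rtg_antisymm (hacyc : ∀ x, ¬ Relation.TransGen G x x) {x y : V}
    (h1 : Relation.ReflTransGen G x y) (h2 : Relation.ReflTransGen G y x) :
    x = y := by
  rcases h1.cases_head with rfl | ⟨c, hxc, hcy⟩
  · rfl
  · exact absurd (Relation.TransGen.head' hxc (hcy.trans h2)) (hacyc x)

lemma rtg_strict {x y : V} (h : Relation.ReflTransGen G x y) (hne : x ≠ y) :
    Relation.TransGen G x y := by
  rcases h.cases_head with rfl | ⟨c, hxc, hcy⟩
  · exact absurd rfl hne
  · exact Relation.TransGen.head' hxc hcy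

/-- In a DAG without v-structures, strict ancestors of a vertex are totally
ordered. -/
lemma anc_chain (wf : WellFounded (Relation.TransGen G))
    (hnv : ∀ a b c, a ≠ c → G a b → G c b → Adjacent G a c) :
    ∀ b x y, Relation.TransGen G x b → Relation.TransGen G y b →
      x = y ∨ Relation.TransGen G x y ∨ Relation.TransGen G y x := by
  intro b
  induction b using WellFounded.induction wf with
  | _ b ih =>
    intro x y hxb hyb
    obtain ⟨p, hxp, hpb⟩ := Relation.TransGen.tail'_iff.mp hxb
    obtain ⟨q, hyq, hqb⟩ := Relation.TransGen.tail'_iff.mp hyb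
    by_cases hpq : p = q
    · subst hpq
      by_cases hxq : x = p
      · subst hxq
        by_cases hyx : y = x
        · exact Or.inl hyx.symm
        · exact Or.inr (Or.inr (rtg_strict hyq (Ne.symm (fun h => hyx h.symm))))
      · by_cases hyp : y = p
        · subst hyp
          exact Or.inr (Or.inl (rtg_strict hxp hxq))
        · exact ih p (Relation.TransGen.single hpb) x y
            (rtg_strict hxp hxq) (rtg_strict hyq hyp)
    · rcases hnv p b q hpq hpb hqb with hpq' | hqp'
      · -- G p q
        have hx' : Relation.TransGen G x q := Relation.TransGen.tail' hxp hpq'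
        by_cases hyq' : y = q
        · subst hyq'; exact Or.inr (Or.inl hx')
        · exact ih q (Relation.TransGen.single hqb) x y hx'
            (rtg_strict hyq hyq')
      · -- G q p
        have hy' : Relation.TransGen G y p := Relation.TransGen.tail' hyq hqp'
        by_cases hxp' : x = p
        · subst hxp'; exact Or.inr (Or.inr hy')
        · exact ih p (Relation.TransGen.single hpb) x y
            (rtg_strict hxp hxp') hy'

/-- Comparability of (weak) ancestors. -/
lemma anc_chainR (wf : WellFounded (Relation.TransGen G))
    (hnv : ∀ a b c, a ≠ c → G a b → G c b → Adjacent G a c)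
    {b x y : V} (hx : Relation.ReflTransGen G x b)
    (hy : Relation.ReflTransGen G y b) :
    Relation.ReflTransGen G x y ∨ Relation.ReflTransGen G y x := by
  by_cases hxb : x = b
  · subst hxb; exact Or.inr hy
  by_cases hyb : y = b
  · subst hyb; exact Or.inl hx
  rcases anc_chain wf hnv b x y (rtg_strict hx hxb) (rtg_strict hy hyb) with
    rfl | h | h
  · exact Or.inl Relation.ReflTransGen.refl
  · exact Or.inl h.to_reflTransGen
  · exact Or.inr h.to_reflTransGen

/-- If `a ⇝ z ⇝ b`, `G a b` and `a ≠ z`, then `G a z`. -/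
lemma edge_to_mid (hacyc : ∀ x, ¬ Relation.TransGen G x x)
    (hnv : ∀ a b c, a ≠ c → G a b → G c b → Adjacent G a c)
    {a b : V} (hab : G a b) :
    ∀ {z : V}, Relation.ReflTransGen G z b → Relation.ReflTransGen G a z →
      a ≠ z → G a z := by
  intro z hzb
  induction hzb using Relation.ReflTransGen.head_induction_on with
  | refl => intro _ _; exact hab
  | head h' hcb ih =>
    rename_i z' c
    intro haz hne
    by_cases hac : a = c
    · subst hac; exact absurd (no_back hacyc haz h') id
    · have hgac : G a c := ih (haz.tail h') hac
      rcases hnv a c z' hne hgac h' with h | h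
      · exact h
      · exact absurd (no_back hacyc haz h) id

/-- After intervening on `z`, every vertex `b` strictly below `z` and not
adjacent to `z` gets some incoming arc from a descendant of `z` oriented. -/
lemma desc_parent (wf : WellFounded (Relation.TransGen G))
    (hacyc : ∀ x, ¬ Relation.TransGen G x x)
    (hnv : ∀ a b c, a ≠ c → G a b → G c b → Adjacent G a c) {z : V} :
    ∀ q b, Relation.ReflTransGen G z q → G q b → ¬ Adjacent G z b →
      ∃ p, Relation.ReflTransGen G z p ∧ G p b ∧ Oriented G z p b := by
  intro q
  induction q using WellFounded.induction wf with
  | _ q ih =>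
    intro b hzq hqb hnadj
    by_cases hzqeq : z = q
    · subst hzqeq; exact absurd (Or.inl hqb) hnadj
    obtain ⟨r, hzr, hrq⟩ := Relation.TransGen.tail'_iff.mp (rtg_strict hzq hzqeq)
    by_cases hadj : Adjacent G z q
    · have hgzq : G z q := by
        rcases hadj with h | h
        · exact h
        · exact absurd (no_back hacyc hzq h) id
      exact ⟨q, hzq, hqb,
        Oriented.meek1 (Oriented.base hgzq (Or.inl rfl)) hqb hnadj⟩
    · obtain ⟨p', hzp', hp'q, op'q⟩ :=
        ih r (Relation.TransGen.single hrq) q hzr hrq hadj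
      by_cases h2 : Adjacent G p' b
      · have hgp'b : G p' b := by
          rcases h2 with h | h
          · exact h
          · exact absurd
              (no_back hacyc
                ((Relation.ReflTransGen.single hp'q).tail hqb) h) id
        exact ih p' (Relation.TransGen.single hp'q) b hzp' hgp'b hnadj
      · exact ⟨q, hzq, hqb, Oriented.meek1 op'q hqb h2⟩

/-- Fact (ii): if `a ⇝ z ⇝ b` and `G a b`, then intervening on `z` orients
`a → b`. -/
lemma orient_mid (wf : WellFounded (Relation.TransGen G))
    (hacyc : ∀ x, ¬ Relation.TransGen G x x)
    (hnv : ∀ a b c, a ≠ c → G a b → G c b → Adjacent G a c) {z : V} :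
    ∀ b a, G a b → Relation.ReflTransGen G a z → Relation.ReflTransGen G z b →
      Oriented G z a b := by
  intro b
  induction b using WellFounded.induction wf with
  | _ b ih =>
    intro a hab haz hzb
    by_cases h1 : a = z
    · subst h1; exact Oriented.base hab (Or.inl rfl)
    by_cases h2 : b = z
    · subst h2; exact Oriented.base hab (Or.inr rfl)
    by_cases hadj : Adjacent G z b
    · have hgzb : G z b := by
        rcases hadj with h | h
        · exact h
        · exact absurd (no_back hacyc hzb h) id
      have hgaz : G a z := edge_to_mid hacyc hnv hab hzb haz h1
      exact Oriented.meek2 (Oriented.base hgaz (Or.inr rfl))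
        (Oriented.base hgzb (Or.inl rfl)) hab
    · obtain ⟨q, hzq, hqb⟩ :=
        Relation.TransGen.tail'_iff.mp (rtg_strict hzb fun h => h2 h.symm)
      obtain ⟨p, hzp, hpb, opb⟩ := desc_parent wf hacyc hnv q b hzq hqb hadj
      have hap : a ≠ p := by
        intro h; subst h; exact h1 (rtg_antisymm hacyc haz hzp)
      have hgap : G a p := by
        rcases hnv a b p hap hab hpb with h | h
        · exact h
        · exact absurd (no_back hacyc (haz.trans hzp) h) id
      exact Oriented.meek2
        (ih p (Relation.TransGen.single hpb) a hgap haz hzp) opb hab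

/-- Simulation: a descendant `s` of the intervened vertex `w` orients every
arc oriented by `w` whose head is below `s`. -/
lemma simulate (wf : WellFounded (Relation.TransGen G))
    (hacyc : ∀ x, ¬ Relation.TransGen G x x)
    (hnv : ∀ a b c, a ≠ c → G a b → G c b → Adjacent G a c)
    {w s : V} (hws : Relation.ReflTransGen G w s) :
    ∀ {a b : V}, Oriented G w a b → Relation.ReflTransGen G s b →
      Oriented G s a b := by
  intro a b h
  induction h with
  | base hab hz =>
    intro hsb
    rcases hz with rfl | rfl
    · exact orient_mid wf hacyc hnv _ _ hab hws hsb
    · exact Oriented.base hab (Or.inr (rtg_antisymm hacyc hsb hws).symm)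
  | meek1 hca hab hnadj ih =>
    intro hsb
    rcases anc_chainR wf hnv hsb (Relation.ReflTransGen.single hab) with
      hsa | has
    · exact Oriented.meek1 (ih hsa) hab hnadj
    · exact orient_mid wf hacyc hnv _ _ hab has hsb
  | meek2 hac hcb hab ih1 ih2 =>
    intro hsb
    rcases anc_chainR wf hnv hsb (Relation.ReflTransGen.single hab) with
      hsa | has
    · rcases anc_chainR wf hnv hsb
        (Relation.ReflTransGen.single hcb.edge) with hsc | hcs
      · exact Oriented.meek2 (ih1 hsc) (ih2 hsb) hab
      · exact orient_mid wf hacyc hnv _ _ hab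
          ((Relation.ReflTransGen.single hac.edge).trans hcs) hsb
    · exact orient_mid wf hacyc hnv _ _ hab has hsb
  | meek3 hdb hcb hda hca hncd hab ih1 ih2 =>
    intro hsb
    rcases anc_chainR wf hnv hsb (Relation.ReflTransGen.single hab) with
      hsa | has
    · exact Oriented.meek3 (ih1 hsb) (ih2 hsb) hda hca hncd hab
    · exact orient_mid wf hacyc hnv _ _ hab has hsb
  | meek4 hdc hcb hda hca hnbd hab ih1 ih2 =>
    rename_i a b c d
    intro hsb
    rcases anc_chainR wf hnv hsb (Relation.ReflTransGen.single hab) with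
      hsa | has
    · rcases anc_chainR wf hnv hsb
        (Relation.ReflTransGen.single hcb.edge) with hsc | hcs
      · exact Oriented.meek4 (ih1 hsc) (ih2 hsb) hda hca hnbd hab
      · -- `c ⇝ s ⇝ a`: use Meek R1 with `d → a`.
        have hds : Relation.ReflTransGen G d s :=
          (Relation.ReflTransGen.single hdc.edge).trans hcs
        have hgda : G d a := by
          rcases hda with h | h
          · exact h
          · exact absurd (no_back hacyc (hds.trans hsa) h) id
        have oda : Oriented G s d a := orient_mid wf hacyc hnv _ _ hgda hds hsa
        exact Oriented.meek1 oda hab (fun h => hnbd (Or.symm h))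
    · exact orient_mid wf hacyc hnv _ _ hab has hsb

end Aux

/-- For a connected DAG `G` without v-structures and an arc `u → v`, the set of
vertices whose atomic intervention orients `u → v` is exactly
`Des[w] ∩ Anc[v]` for some ancestor `w` of `u`. -/
theorem stmt19 [Fintype V] (G : V → V → Prop)
    (hacyc : ∀ x, ¬ Relation.TransGen G x x)
    (hnv : ∀ a b c, a ≠ c → G a b → G c b → Adjacent G a c)
    (hconn : ∀ a b, Relation.ReflTransGen (fun x y => Adjacent G x y) a b)
    (u v : V) (huv : G u v) :
    ∃ w : V, Relation.ReflTransGen G w u ∧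
      ∀ x : V, Oriented G x u v ↔
        (Relation.ReflTransGen G w x ∧ Relation.ReflTransGen G x v) := by
  classical
  letI : IsTrans V (Relation.TransGen G) :=
    ⟨fun _ _ _ h1 h2 => h1.trans h2⟩
  letI : IsIrrefl V (Relation.TransGen G) := ⟨hacyc⟩
  have wf : WellFounded (Relation.TransGen G) :=
    Finite.wellFounded_of_trans_of_irrefl _
  have huA : Oriented G u u v := Oriented.base huv (Or.inl rfl)
  obtain ⟨w, hwA, hmin⟩ :=
    wf.has_min {x | Oriented G x u v} ⟨u, huA⟩
  have least : ∀ x, Oriented G x u v → Relation.ReflTransGen G w x := by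
    intro x hx
    rcases anc_chainR wf hnv hx.anc hwA.anc with hxw | hwx
    · rcases hxw.cases_head with rfl | ⟨c, hxc, hcw⟩
      · exact Relation.ReflTransGen.refl
      · exact absurd (Relation.TransGen.head' hxc hcw) (hmin x hx)
    · exact hwx
  exact ⟨w, least u huA, fun x =>
    ⟨fun hx => ⟨least x hx, hx.anc⟩,
     fun ⟨h1, h2⟩ => simulate wf hacyc hnv h1 hwA h2⟩⟩
end
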